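/- Let 0 < p ≤ 1 and let (M,d) be a metric space with base point 0. Then there exist a real vector space X, a p-norm N on X (i.e., N ≥ 0, N(c·v) = |c|·N(v), N(v+w)^p ≤ N(v)^p + N(w)^p, and N(v) = 0 implies v = 0) and a map f : M → X with f(0) = 0 and N(f(x) − f(y)) ≤ d(x,y) for all x, y ∈ M, such that for every μ ∈ P(M) one has N(Σ_{x∈M} μ(x)·f(x)) = ‖μ‖_p. (Hence ‖μ‖_p equals the supremum of ‖Σ_x μ(x) f(x)‖_X over all p-normed spaces X and all 1-Lipschitz base-point-preserving maps f : M → X.) -/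

import Mathlib

/-!
The free `p`-space realizes its own norm: take `X = P(M)` with `N = ‖·‖_p` and `f = δ`. Scaling
and concatenating expansions make `‖·‖_p` homogeneous and `p`-subadditive, and the one-term
expansion of `δ(x) - δ(y)` makes `δ` 1-Lipschitz. Definiteness is where `p ≤ 1` enters: pairing an
expansion with a 1-Lipschitz `g` vanishing at the base point gives
`|∑ μ(z) g(z)| ≤ ∑ |a_j| ≤ (∑ |a_j|^p)^{1/p}`, and `g = d(·, F)`, for `F` the base point together
with all support points of `μ` but `x₀`, isolates the coefficient `μ(x₀)`.
-/

open scoped BigOperators Classical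

noncomputable section

/-- The point mass `δ(x)` in the free space construction: the indicator function of `{x}`
if `x ≠ base`, and `0` if `x = base`. -/
def freeDelta {M : Type*} (base x : M) : M → ℝ :=
  fun z => if x = base then 0 else if z = x then 1 else 0

/-- The set of admissible quantities `(∑ j |a_j|^p)^{1/p}` arising from expansions
`μ = ∑ j a_j (δ(x_j) - δ(y_j))/d(x_j, y_j)` with all points `x_j ≠ y_j` lying in `N`. -/
def freeNormSet {M : Type*} [MetricSpace M] (base : M) (N : Set M) (p : ℝ) (μ : M → ℝ) :
    Set ℝ :=
  {r | ∃ (n : ℕ) (a : Fin n → ℝ) (x y : Fin n → M),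
    (∀ j, x j ∈ N) ∧ (∀ j, y j ∈ N) ∧ (∀ j, x j ≠ y j) ∧
    μ = (fun z => ∑ j, a j *
      ((freeDelta base (x j) z - freeDelta base (y j) z) / dist (x j) (y j))) ∧
    r = (∑ j, |a j| ^ p) ^ (1 / p)}

/-- The Lipschitz-free `p`-norm of `μ` computed with expansions supported on `N ⊆ M`. -/
def freeNormOn {M : Type*} [MetricSpace M] (base : M) (N : Set M) (p : ℝ) (μ : M → ℝ) : ℝ :=
  sInf (freeNormSet base N p μ)

/-- The Lipschitz-free `p`-norm of `μ ∈ P(M)`. -/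
def freeNorm {M : Type*} [MetricSpace M] (base : M) (p : ℝ) (μ : M → ℝ) : ℝ :=
  freeNormOn base Set.univ p μ


universe u

/-- A real vector space equipped with a `p`-norm. -/
structure PNormedSpace (p : ℝ) : Type (u + 1) where
  carrier : Type u
  [grp : AddCommGroup carrier]
  [mod : Module ℝ carrier]
  pnorm : carrier → ℝ
  pnorm_nonneg : ∀ v, 0 ≤ pnorm v
  pnorm_smul : ∀ (c : ℝ) (v : carrier), pnorm (c • v) = |c| * pnorm v
  pnorm_add : ∀ v w : carrier, pnorm (v + w) ^ p ≤ pnorm v ^ p + pnorm w ^ p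
  pnorm_eq_zero : ∀ v, pnorm v = 0 → v = 0

attribute [instance] PNormedSpace.grp PNormedSpace.mod

open Function
open scoped Pointwise

theorem Real.rpow_sum_le_sum_rpow {ι : Type*} {p : ℝ} (hp0 : 0 < p) (hp1 : p ≤ 1)
    (s : Finset ι) {f : ι → ℝ} (hf : ∀ i ∈ s, 0 ≤ f i) :
    (∑ i ∈ s, f i) ^ p ≤ ∑ i ∈ s, f i ^ p := by
  induction s using Finset.cons_induction with
  | empty => simp [Real.zero_rpow hp0.ne']
  | cons i s his ih =>
    simp only [Finset.mem_cons, forall_eq_or_imp] at hf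
    rw [Finset.sum_cons, Finset.sum_cons]
    calc (f i + ∑ j ∈ s, f j) ^ p ≤ f i ^ p + (∑ j ∈ s, f j) ^ p :=
          Real.rpow_add_le_add_rpow hf.1 (Finset.sum_nonneg hf.2) hp0.le hp1
      _ ≤ f i ^ p + ∑ j ∈ s, f j ^ p := by gcongr; exact ih hf.2

theorem Real.rpow_sInf_eq_iInf {S : Set ℝ} (hS : S.Nonempty) (h0 : ∀ x ∈ S, 0 ≤ x) {p : ℝ}
    (hp : 0 ≤ p) : sInf S ^ p = ⨅ r : S, (r : ℝ) ^ p := by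
  rw [← sInf_image' (f := fun x : ℝ => x ^ p)]
  refine MonotoneOn.map_csInf_of_continuousWithinAt
    (Real.continuousAt_rpow_const _ _ (Or.inr hp)).continuousWithinAt
    ((Real.monotoneOn_rpow_Ici_of_exponent_nonneg hp).mono h0) hS ⟨0, h0⟩

section FreeDelta

variable {M : Type*}

theorem freeDelta_self (base : M) : freeDelta base base = 0 := by
  ext; simp [freeDelta]

theorem freeDelta_apply_base (base x : M) : freeDelta base x base = 0 := by
  unfold freeDelta
  split_ifs <;> simp_all

theorem support_freeDelta_subset (base x : M) : support (freeDelta base x) ⊆ {x} := by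
  intro z hz
  by_contra hzx
  rw [Set.mem_singleton_iff] at hzx
  simp [freeDelta, hzx] at hz

theorem hasFiniteSupport_freeDelta (base x : M) : HasFiniteSupport (freeDelta base x) :=
  (Set.finite_singleton x).subset (support_freeDelta_subset base x)

theorem finsum_smul_freeDelta {μ : M → ℝ} (hμ : (support μ).Finite) (h0 : μ base = 0) :
    ∑ᶠ x, μ x • freeDelta base x = μ := by
  ext z
  rw [finsum_apply (f := fun x => μ x • freeDelta base x)
      (hμ.subset (support_smul_subset_left μ (freeDelta base))),
    finsum_eq_single _ z fun x hx => by simp [freeDelta, Ne.symm hx]]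
  by_cases hz : z = base <;> simp [freeDelta, hz, h0]

theorem finsum_freeDelta_mul {g : M → ℝ} (hg : g base = 0) (x : M) :
    ∑ᶠ z, freeDelta base x z * g z = g x := by
  rw [finsum_eq_single _ x fun z hz => by simp [freeDelta, hz]]
  by_cases hx : x = base <;> simp [freeDelta, hx, hg]

end FreeDelta

section FreeNorm

variable {M : Type*} [MetricSpace M] {base : M} {N : Set M} {p : ℝ}

theorem finsum_expansion_mul {g : M → ℝ} (hg : g base = 0) {n : ℕ} (a : Fin n → ℝ)
    (x y : Fin n → M) :
    ∑ᶠ z, (∑ j, a j * ((freeDelta base (x j) z - freeDelta base (y j) z) / dist (x j) (y j)))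
        * g z = ∑ j, a j * ((g (x j) - g (y j)) / dist (x j) (y j)) := by
  have hterm : ∀ j z, a j * ((freeDelta base (x j) z - freeDelta base (y j) z) /
      dist (x j) (y j)) * g z = a j / dist (x j) (y j) *
        (freeDelta base (x j) z * g z - freeDelta base (y j) z * g z) := fun j z => by ring
  have hfin : ∀ w : M, HasFiniteSupport fun z => freeDelta base w z * g z := fun w =>
    (hasFiniteSupport_freeDelta base w).subset (support_mul_subset_left _ _)
  simp_rw [Finset.sum_mul, hterm]
  rw [← sum_finsum_comm _ _ fun j _ =>
    ((hfin (x j)).sub (hfin (y j))).subset (support_mul_subset_right _ _)]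
  refine Finset.sum_congr rfl fun j _ => ?_
  rw [← mul_finsum, finsum_sub_distrib (hfin _) (hfin _), finsum_freeDelta_mul hg,
    finsum_freeDelta_mul hg]
  ring

theorem freeNormSet_nonneg {μ : M → ℝ} {r : ℝ} (hr : r ∈ freeNormSet base N p μ) : 0 ≤ r := by
  obtain ⟨n, a, x, y, -, -, -, -, rfl⟩ := hr
  positivity

theorem freeNormSet_bddBelow (μ : M → ℝ) : BddBelow (freeNormSet base N p μ) :=
  ⟨0, fun _ => freeNormSet_nonneg⟩

theorem freeNormOn_nonneg (μ : M → ℝ) : 0 ≤ freeNormOn base N p μ :=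
  Real.sInf_nonneg fun _ => freeNormSet_nonneg

theorem zero_mem_freeNormSet (hp : p ≠ 0) : (0 : ℝ) ∈ freeNormSet base N p 0 :=
  ⟨0, Fin.elim0, Fin.elim0, Fin.elim0, fun j => j.elim0, fun j => j.elim0, fun j => j.elim0,
    by ext; simp, by simp [Real.zero_rpow (inv_ne_zero hp)]⟩

theorem freeNormOn_zero (hp : p ≠ 0) : freeNormOn base N p 0 = 0 :=
  le_antisymm (csInf_le (freeNormSet_bddBelow 0) (zero_mem_freeNormSet hp)) (freeNormOn_nonneg 0)

theorem dist_mem_freeNormSet (hp : p ≠ 0) {x y : M} (hx : x ∈ N) (hy : y ∈ N) (hxy : x ≠ y) :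
    dist x y ∈ freeNormSet base N p (freeDelta base x - freeDelta base y) := by
  refine ⟨1, fun _ => dist x y, fun _ => x, fun _ => y, fun _ => hx, fun _ => hy,
    fun _ => hxy, ?_, ?_⟩
  · ext z
    simp [mul_div_cancel₀ _ (dist_ne_zero.mpr hxy)]
  · simp [Real.rpow_rpow_inv dist_nonneg hp]

theorem freeNormOn_freeDelta_sub_le (hp : p ≠ 0) {x y : M} (hx : x ∈ N) (hy : y ∈ N) :
    freeNormOn base N p (freeDelta base x - freeDelta base y) ≤ dist x y := by
  rcases eq_or_ne x y with rfl | hxy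
  · simp [freeNormOn_zero hp]
  · exact csInf_le (freeNormSet_bddBelow _) (dist_mem_freeNormSet hp hx hy hxy)

theorem smul_mem_freeNormSet (hp : p ≠ 0) {μ : M → ℝ} {r : ℝ}
    (hr : r ∈ freeNormSet base N p μ) (c : ℝ) : |c| * r ∈ freeNormSet base N p (c • μ) := by
  obtain ⟨n, a, x, y, hx, hy, hxy, rfl, rfl⟩ := hr
  refine ⟨n, fun j => c * a j, x, y, hx, hy, hxy, ?_, ?_⟩
  · ext z
    simp only [Pi.smul_apply, smul_eq_mul, Finset.mul_sum, mul_assoc]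
  · simp_rw [abs_mul, Real.mul_rpow (abs_nonneg c) (abs_nonneg _), ← Finset.mul_sum]
    rw [Real.mul_rpow (by positivity) (by positivity), one_div,
      Real.rpow_rpow_inv (abs_nonneg c) hp]

theorem add_mem_freeNormSet {μ ν : M → ℝ} {r t : ℝ} (hp : p ≠ 0)
    (hr : r ∈ freeNormSet base N p μ) (ht : t ∈ freeNormSet base N p ν) :
    (r ^ p + t ^ p) ^ (1 / p) ∈ freeNormSet base N p (μ + ν) := by
  obtain ⟨n, a, x, y, hx, hy, hxy, rfl, rfl⟩ := hr
  obtain ⟨m, b, u, v, hu, hv, huv, rfl, rfl⟩ := ht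
  refine ⟨n + m, Fin.append a b, Fin.append x u, Fin.append y v, ?_, ?_, ?_, ?_, ?_⟩
  · simp [Fin.forall_fin_add, hx, hu]
  · simp [Fin.forall_fin_add, hy, hv]
  · simp [Fin.forall_fin_add, hxy, huv]
  · ext z
    simp [Fin.sum_univ_add]
  · rw [one_div, Real.rpow_inv_rpow (by positivity) hp, Real.rpow_inv_rpow (by positivity) hp,
      Fin.sum_univ_add]
    simp

theorem freeNormOn_smul (hp : p ≠ 0) (μ : M → ℝ) (c : ℝ) :
    freeNormOn base N p (c • μ) = |c| * freeNormOn base N p μ := by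
  rcases eq_or_ne c 0 with rfl | hc
  · simp [freeNormOn_zero hp]
  have hset : freeNormSet base N p (c • μ) = |c| • freeNormSet base N p μ := by
    refine Set.Subset.antisymm (fun r hr => ⟨|c⁻¹| * r, ?_, ?_⟩) ?_
    · simpa [inv_smul_smul₀ hc] using smul_mem_freeNormSet hp hr c⁻¹
    · simp [abs_inv, hc]
    · rintro _ ⟨r, hr, rfl⟩
      exact smul_mem_freeNormSet hp hr c
  rw [freeNormOn, hset, Real.sInf_smul_of_nonneg (abs_nonneg c), smul_eq_mul, freeNormOn]

theorem freeNormOn_rpow_eq_iInf {μ : M → ℝ} (hμ : (freeNormSet base N p μ).Nonempty)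
    (hp : 0 ≤ p) : freeNormOn base N p μ ^ p = ⨅ r : freeNormSet base N p μ, (r : ℝ) ^ p :=
  Real.rpow_sInf_eq_iInf hμ (fun _ => freeNormSet_nonneg) hp

theorem freeNormOn_add_rpow_le (hp : 0 < p) {μ ν : M → ℝ}
    (hμ : (freeNormSet base N p μ).Nonempty) (hν : (freeNormSet base N p ν).Nonempty) :
    freeNormOn base N p (μ + ν) ^ p ≤ freeNormOn base N p μ ^ p + freeNormOn base N p ν ^ p := by
  have := hμ.to_subtype
  have := hν.to_subtype
  rw [freeNormOn_rpow_eq_iInf hμ hp.le, freeNormOn_rpow_eq_iInf hν hp.le]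
  refine le_ciInf_add_ciInf fun ⟨r, hr⟩ ⟨t, ht⟩ => ?_
  have hrt : 0 ≤ r ^ p + t ^ p := by
    have := freeNormSet_nonneg hr
    have := freeNormSet_nonneg ht
    positivity
  calc freeNormOn base N p (μ + ν) ^ p ≤ ((r ^ p + t ^ p) ^ (1 / p)) ^ p :=
        Real.rpow_le_rpow (freeNormOn_nonneg _)
          (csInf_le (freeNormSet_bddBelow _) (add_mem_freeNormSet hp.ne' hr ht)) hp.le
    _ = r ^ p + t ^ p := by rw [one_div, Real.rpow_inv_rpow hrt hp.ne']

theorem abs_finsum_mul_le_of_mem_freeNormSet (hp0 : 0 < p) (hp1 : p ≤ 1) {μ : M → ℝ} {r : ℝ}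
    (hr : r ∈ freeNormSet base N p μ) {g : M → ℝ} (hg0 : g base = 0) (hg : LipschitzWith 1 g) :
    |∑ᶠ z, μ z * g z| ≤ r := by
  obtain ⟨n, a, x, y, -, -, hxy, rfl, rfl⟩ := hr
  rw [finsum_expansion_mul hg0]
  have hquot : ∀ j, |(g (x j) - g (y j)) / dist (x j) (y j)| ≤ 1 := fun j => by
    rw [abs_div, abs_of_nonneg dist_nonneg, div_le_one (dist_pos.mpr (hxy j)), ← Real.dist_eq]
    simpa using hg.dist_le_mul (x j) (y j)
  calc |∑ j, a j * ((g (x j) - g (y j)) / dist (x j) (y j))|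
      ≤ ∑ j, |a j| := (Finset.abs_sum_le_sum_abs _ _).trans <| Finset.sum_le_sum fun j _ => by
        rw [abs_mul]
        exact mul_le_of_le_one_right (abs_nonneg _) (hquot j)
    _ ≤ (∑ j, |a j| ^ p) ^ (1 / p) := by
        rw [one_div, Real.le_rpow_inv_iff_of_pos (by positivity) (by positivity) hp0]
        exact Real.rpow_sum_le_sum_rpow hp0 hp1 _ fun j _ => abs_nonneg (a j)

theorem freeNormSet_nonempty (hp : p ≠ 0) {μ : M → ℝ} (hμ : (support μ).Finite)
    (h0 : μ base = 0) : (freeNormSet base Set.univ p μ).Nonempty := by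
  rw [← finsum_smul_freeDelta hμ h0]
  refine finsum_induction (fun ν => (freeNormSet base Set.univ p ν).Nonempty)
    ⟨0, zero_mem_freeNormSet hp⟩ (fun _ _ ⟨r, hr⟩ ⟨t, ht⟩ => ⟨_, add_mem_freeNormSet hp hr ht⟩)
    fun x => ?_
  rcases eq_or_ne x base with rfl | hx
  · simpa [freeDelta_self] using ⟨0, zero_mem_freeNormSet hp⟩
  · have := dist_mem_freeNormSet (base := base) hp (Set.mem_univ x) (Set.mem_univ base) hx
    rw [freeDelta_self, sub_zero] at this
    exact ⟨_, smul_mem_freeNormSet hp this (μ x)⟩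

theorem eq_zero_of_freeNorm_eq_zero (hp0 : 0 < p) (hp1 : p ≤ 1) {μ : M → ℝ}
    (hμ : (support μ).Finite) (h0 : μ base = 0) (h : freeNorm base p μ = 0) : μ = 0 := by
  by_contra hne
  obtain ⟨x₀, hx₀⟩ := Function.ne_iff.mp hne
  have hbase : base ≠ x₀ := fun h => hx₀ (h ▸ h0)
  set F := insert base (support μ) \ {x₀}
  have hF : IsClosed F := (hμ.insert base).sdiff.isClosed
  have hgx₀ : 0 < Metric.infDist x₀ F :=
    (hF.notMem_iff_infDist_pos ⟨base, by simp [F, hbase]⟩).mp (by simp [F])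
  have hpair : ∑ᶠ z, μ z * Metric.infDist z F = μ x₀ * Metric.infDist x₀ F := by
    refine finsum_eq_single _ x₀ fun z hz => ?_
    by_cases hμz : μ z = 0
    · simp [hμz]
    · simp [Metric.infDist_zero_of_mem (show z ∈ F by simp [F, hμz, hz])]
  have hle : |μ x₀ * Metric.infDist x₀ F| ≤ freeNorm base p μ :=
    le_csInf (freeNormSet_nonempty hp0.ne' hμ h0) fun r hr => hpair ▸
      abs_finsum_mul_le_of_mem_freeNormSet hp0 hp1 hr
        (Metric.infDist_zero_of_mem (by simp [F, hbase])) (Metric.lipschitz_infDist_pt F)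
  rw [h] at hle
  exact (abs_pos.mpr (mul_ne_zero hx₀ hgx₀.ne')).not_ge hle

end FreeNorm

def molecules (M : Type*) [MetricSpace M] (base : M) : Submodule ℝ (M → ℝ) where
  carrier := {μ | (support μ).Finite ∧ μ base = 0}
  add_mem' hμ hν := ⟨(hμ.1.union hν.1).subset (support_add _ _), by simp [hμ.2, hν.2]⟩
  zero_mem' := ⟨by simp, rfl⟩
  smul_mem' c _ hμ := ⟨hμ.1.subset (support_const_smul_subset c _), by simp [hμ.2]⟩

theorem freeDelta_mem_molecules {M : Type*} [MetricSpace M] (base x : M) :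
    freeDelta base x ∈ molecules M base :=
  ⟨hasFiniteSupport_freeDelta base x, freeDelta_apply_base base x⟩

def freePSpace (M : Type u) [MetricSpace M] (base : M) {p : ℝ} (hp0 : 0 < p) (hp1 : p ≤ 1) :
    PNormedSpace.{u} p where
  carrier := molecules M base
  pnorm μ := freeNorm base p μ
  pnorm_nonneg _ := freeNormOn_nonneg _
  pnorm_smul c μ := by
    rw [Submodule.coe_smul]
    exact freeNormOn_smul hp0.ne' _ c
  pnorm_add μ ν := freeNormOn_add_rpow_le hp0 (freeNormSet_nonempty hp0.ne' μ.2.1 μ.2.2)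
    (freeNormSet_nonempty hp0.ne' ν.2.1 ν.2.2)
  pnorm_eq_zero μ h := Subtype.ext (eq_zero_of_freeNorm_eq_zero hp0 hp1 μ.2.1 μ.2.2 h)

/-- There is a `p`-normed space `X` and a `1`-Lipschitz base-point
preserving map `f : M → X` realizing `‖μ‖_p` as `N(∑ₓ μ(x) f(x))` for every `μ ∈ P(M)`;
hence `‖·‖_p` is the supremum in the defining formula of the free `p`-space. -/
theorem exists_realizing_pNormedSpace {M : Type u} [MetricSpace M] (base : M) (p : ℝ)
    (hp0 : 0 < p) (hp1 : p ≤ 1) :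
    ∃ (W : PNormedSpace.{u} p) (f : M → W.carrier),
      f base = 0 ∧ (∀ x y, W.pnorm (f x - f y) ≤ dist x y) ∧
      ∀ μ : M → ℝ, (Function.support μ).Finite → μ base = 0 →
        W.pnorm (∑ᶠ x, μ x • f x) = freeNorm base p μ := by
  let f : M → molecules M base := fun x => ⟨freeDelta base x, freeDelta_mem_molecules base x⟩
  refine ⟨freePSpace M base hp0 hp1, f, Subtype.ext (freeDelta_self base),
    fun x y => freeNormOn_freeDelta_sub_le hp0.ne' (Set.mem_univ x) (Set.mem_univ y),
    fun μ hμ h0 => ?_⟩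
  show freeNorm base p ((molecules M base).subtype (∑ᶠ x, μ x • f x)) = freeNorm base p μ
  rw [map_finsum (f := fun x => μ x • f x) _ (hμ.subset (support_smul_subset_left μ f))]
  exact congrArg _ (finsum_smul_freeDelta hμ h0)
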